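/- Let ℓ be the double line of type σ in G(2,V₅) with ideal (in suitable affine coordinates on the chart around v₁∧v₃) generated by t₄², t₅, z₂, z₄, z₅. A homomorphism ψ: I_ℓ → O_ℓ defined on this chart extends to a global element of Hom_{O_G}(I_ℓ, O_ℓ) if and only if it has the form t₄² ↦ ψ₁+ψ₂t₂+ψ₃t₂²+(ψ₄+ψ₅t₂)t₄, t₅ ↦ ψ₆+ψ₇t₂+ψ₈t₄, z₂ ↦ ψ₉+ψ₁₀t₂+ψ₁₁t₄, z₄ ↦ ψ₁₂+ψ₁₀t₄, z₅ ↦ ψ₁₃+ψ₁₀t₄; hence this space of homomorphisms is 13-dimensional. -/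

import Mathlib

/-!
On the overlap `t₂ ≠ 0` a section of `O_ℓ` on the chart around `v₁∧v₂` is a polynomial in
`1/t₂`. After the coordinate change each generator of `I_ℓ` on that chart is the matching
generator around `v₁∧v₃` divided by a power `t₂ⁿ` (up to a correction by `z₂`), so `ψ`
extends exactly when the corresponding image `q` satisfies `q(t₂) = t₂ⁿ p(1/t₂)` for a
polynomial `p`, i.e. `deg q ≤ n`. These degree bounds cut out the 13-parameter family, and
reversing its polynomials produces the extension.
-/

open Polynomial

namespace Stmt14

/-- A section of `O_ℓ` on the affine chart around `v₁∧v₃` is `a(t₂) + t₄·b(t₂)` with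
`t₄² = 0`; it is recorded as the pair `(a, b)` of polynomials. -/
abbrev Sect := Polynomial ℂ × Polynomial ℂ

/-- A homomorphism `ψ : I_ℓ → O_ℓ` on the chart around `v₁∧v₃` is determined by the images
of the five generators `t₄², t₅, z₂, z₄, z₅` of `I_ℓ`; it is recorded as the 5-tuple of
these images. -/
abbrev HomData := Fin 5 → Sect

/-- `ψ` extends to a global element of `Hom_{O_G}(I_ℓ, O_ℓ)`: there exist sections
`p i = (pᵢ, pᵢ')`, images of the generators `y₄², y₅, x₃, x₄, x₅` of `I_ℓ` on the chart
around `v₁∧v₂`, matching `ψ` on the overlap `t₂ ≠ 0` under the coordinate change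
`y₃ = 1/t₂`, `y₄ = t₄/t₂`, `y₅ = t₅/t₂`, `x₃ = −z₂/t₂`, `x₄ = z₄ − (z₂/t₂)t₄`,
`x₅ = z₅ − (z₂/t₂)t₅` (a section `p + y₄·p'` of the second chart has `t₄-components
`(p(1/t₂), (1/t₂)·p'(1/t₂))` on the overlap, and `t₄²`, `t₅`, `z₂` act as `0` on `O_ℓ`). -/
def ExtendsGlobally (ψ : HomData) : Prop :=
  ∃ p : Fin 5 → Sect, ∀ t : ℂ, t ≠ 0 →
    -- image of y₄² = t₄²/t₂²
    ((p 0).1.eval t⁻¹ = (ψ 0).1.eval t / t ^ 2 ∧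
      t⁻¹ * (p 0).2.eval t⁻¹ = (ψ 0).2.eval t / t ^ 2) ∧
    -- image of y₅ = t₅/t₂
    ((p 1).1.eval t⁻¹ = (ψ 1).1.eval t / t ∧
      t⁻¹ * (p 1).2.eval t⁻¹ = (ψ 1).2.eval t / t) ∧
    -- image of x₃ = −z₂/t₂
    ((p 2).1.eval t⁻¹ = -(ψ 2).1.eval t / t ∧
      t⁻¹ * (p 2).2.eval t⁻¹ = -(ψ 2).2.eval t / t) ∧
    -- image of x₄ = z₄ − (z₂/t₂)·t₄
    ((p 3).1.eval t⁻¹ = (ψ 3).1.eval t ∧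
      t⁻¹ * (p 3).2.eval t⁻¹ = (ψ 3).2.eval t - (ψ 2).1.eval t / t) ∧
    -- image of x₅ = z₅ − (z₂/t₂)·t₅
    ((p 4).1.eval t⁻¹ = (ψ 4).1.eval t ∧
      t⁻¹ * (p 4).2.eval t⁻¹ = (ψ 4).2.eval t - (ψ 2).1.eval t / t)

/-- The explicit 13-parameter family of
`t₄² ↦ ψ₁+ψ₂t₂+ψ₃t₂²+(ψ₄+ψ₅t₂)t₄, t₅ ↦ ψ₆+ψ₇t₂+ψ₈t₄, z₂ ↦ ψ₉+ψ₁₀t₂+ψ₁₁t₄,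
z₄ ↦ ψ₁₂+ψ₁₀t₄, z₅ ↦ ψ₁₃+ψ₁₀t₄`. -/
noncomputable def Param (c : Fin 13 → ℂ) : HomData :=
  ![(C (c 0) + C (c 1) * X + C (c 2) * X ^ 2, C (c 3) + C (c 4) * X),
    (C (c 5) + C (c 6) * X, C (c 7)),
    (C (c 8) + C (c 9) * X, C (c 10)),
    (C (c 11), C (c 9)),
    (C (c 12), C (c 9))]

section PolynomialFacts

variable {K : Type*} [Field K] [Infinite K]

theorem natDegree_le_of_pow_mul_eval_inv {n : ℕ} {p q : K[X]}
    (h : ∀ t : K, t ≠ 0 → t ^ n * p.eval t⁻¹ = q.eval t) : q.natDegree ≤ n := by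
  rcases eq_or_ne q 0 with rfl | hq
  · simp
  set d := p.natDegree
  have hreflect : (p.reflect d).natDegree ≤ d := natDegree_reflect_le.trans (max_le le_rfl le_rfl)
  have hpoly : q * X ^ d = X ^ n * p.reflect d := by
    refine eq_of_infinite_eval_eq _ _
      ((Set.finite_singleton 0).infinite_compl.mono fun t ht => ?_)
    have ht : t ≠ 0 := ht
    let := invertibleOfNonzero ht
    have hrefl : p.eval t⁻¹ * t ^ d = (p.reflect d).eval t := by
      have := eval₂_reflect_mul_pow (RingHom.id K) t d (p.reflect d) hreflect
      rwa [reflect_reflect, invOf_eq_inv] at this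
    simp only [Set.mem_ofPred_eq, eval_mul, eval_pow, eval_X, ← h t ht, ← hrefl]
    ring
  have hdeg := (natDegree_mul_le (p := X ^ n) (q := p.reflect d)).trans
    (add_le_add (natDegree_X_pow_le n) hreflect)
  rw [← hpoly, natDegree_mul_X_pow d hq] at hdeg
  omega

end PolynomialFacts

section SmallDegree

variable {R : Type*} [CommRing R]

theorem eq_C_add_C_mul_X_add_C_mul_X_sq_of_natDegree_le_two {p : R[X]} (h : p.natDegree ≤ 2) :
    p = C (p.coeff 0) + C (p.coeff 1) * X + C (p.coeff 2) * X ^ 2 := by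
  conv_lhs => rw [as_sum_range_C_mul_X_pow' p (n := 3) (by omega)]
  simp [Finset.sum_range_succ]

theorem eq_C_coeff_one_of_natDegree_X_mul_sub_le_zero {a b : R[X]}
    (h : (X * a - b).natDegree ≤ 0) (hb : b.natDegree ≤ 1) : a = C (b.coeff 1) := by
  ext k
  have hk : (X * a - b).coeff (k + 1) = 0 := coeff_eq_zero_of_natDegree_lt (by omega)
  rw [coeff_sub, coeff_X_mul, sub_eq_zero] at hk
  rcases k with _ | k
  · simp [hk]
  · simp [hk, coeff_eq_zero_of_natDegree_lt (show b.natDegree < k + 2 by omega)]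

end SmallDegree

noncomputable def paramCoeffs (ψ : HomData) : Fin 13 → ℂ :=
  ![(ψ 0).1.coeff 0, (ψ 0).1.coeff 1, (ψ 0).1.coeff 2, (ψ 0).2.coeff 0, (ψ 0).2.coeff 1,
    (ψ 1).1.coeff 0, (ψ 1).1.coeff 1, (ψ 1).2.coeff 0,
    (ψ 2).1.coeff 0, (ψ 2).1.coeff 1, (ψ 2).2.coeff 0,
    (ψ 3).1.coeff 0, (ψ 4).1.coeff 0]

theorem paramCoeffs_param : Function.LeftInverse paramCoeffs Param := by
  intro c
  funext i
  fin_cases i <;> simp [paramCoeffs, Param, coeff_C, coeff_X]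

theorem param_injective : Function.Injective Param :=
  paramCoeffs_param.injective

/-- Regularity at `t₂ = ∞` of the images of the generators. -/
def DegreeBounds (ψ : HomData) : Prop :=
  (ψ 0).1.natDegree ≤ 2 ∧ (ψ 0).2.natDegree ≤ 1 ∧
  (ψ 1).1.natDegree ≤ 1 ∧ (ψ 1).2.natDegree ≤ 0 ∧
  (ψ 2).1.natDegree ≤ 1 ∧ (ψ 2).2.natDegree ≤ 0 ∧
  (ψ 3).1.natDegree ≤ 0 ∧ (X * (ψ 3).2 - (ψ 2).1).natDegree ≤ 0 ∧
  (ψ 4).1.natDegree ≤ 0 ∧ (X * (ψ 4).2 - (ψ 2).1).natDegree ≤ 0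

theorem ExtendsGlobally.degreeBounds {ψ : HomData} (hψ : ExtendsGlobally ψ) :
    DegreeBounds ψ := by
  obtain ⟨p, H⟩ := hψ
  have clear_inv {t a b : ℂ} (ht : t ≠ 0) (h : t⁻¹ * a = b) : a = t * b := by
    rw [← h, mul_inv_cancel_left₀ ht]
  refine ⟨natDegree_le_of_pow_mul_eval_inv (p := (p 0).1) fun t ht => ?_,
    natDegree_le_of_pow_mul_eval_inv (p := (p 0).2) fun t ht => ?_,
    natDegree_le_of_pow_mul_eval_inv (p := (p 1).1) fun t ht => ?_,
    natDegree_le_of_pow_mul_eval_inv (p := (p 1).2) fun t ht => ?_,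
    natDegree_le_of_pow_mul_eval_inv (p := -(p 2).1) fun t ht => ?_,
    natDegree_le_of_pow_mul_eval_inv (p := -(p 2).2) fun t ht => ?_,
    natDegree_le_of_pow_mul_eval_inv (p := (p 3).1) fun t ht => ?_,
    natDegree_le_of_pow_mul_eval_inv (p := (p 3).2) fun t ht => ?_,
    natDegree_le_of_pow_mul_eval_inv (p := (p 4).1) fun t ht => ?_,
    natDegree_le_of_pow_mul_eval_inv (p := (p 4).2) fun t ht => ?_⟩ <;>
  obtain ⟨⟨h01, h02⟩, ⟨h11, h12⟩, ⟨h21, h22⟩, ⟨h31, h32⟩, ⟨h41, h42⟩⟩ := H t ht <;>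
  simp only [eval_neg, eval_sub, eval_mul, eval_X, h01, h11, h21, h31, h41, clear_inv ht h02,
    clear_inv ht h12, clear_inv ht h22, clear_inv ht h32, clear_inv ht h42] <;>
  field_simp

theorem DegreeBounds.param_paramCoeffs {ψ : HomData} (hψ : DegreeBounds ψ) :
    Param (paramCoeffs ψ) = ψ := by
  obtain ⟨h01, h02, h11, h12, h21, h22, h31, h32, h41, h42⟩ := hψ
  funext i
  fin_cases i <;> refine Prod.ext ?_ ?_ <;>
    simp only [Param, paramCoeffs, Matrix.cons_val_zero, Matrix.cons_val_one, Matrix.head_cons,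
      Matrix.cons_val_two, Matrix.tail_cons, Matrix.cons_val_three, Matrix.cons_val_four,
      Fin.isValue]
  · exact (eq_C_add_C_mul_X_add_C_mul_X_sq_of_natDegree_le_two h01).symm
  · exact ((eq_X_add_C_of_natDegree_le_one h02).trans (add_comm _ _)).symm
  · exact ((eq_X_add_C_of_natDegree_le_one h11).trans (add_comm _ _)).symm
  · exact (eq_C_of_natDegree_le_zero h12).symm
  · exact ((eq_X_add_C_of_natDegree_le_one h21).trans (add_comm _ _)).symm
  · exact (eq_C_of_natDegree_le_zero h22).symm
  · exact (eq_C_of_natDegree_le_zero h31).symm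
  · exact (eq_C_coeff_one_of_natDegree_X_mul_sub_le_zero h32 h21).symm
  · exact (eq_C_of_natDegree_le_zero h41).symm
  · exact (eq_C_coeff_one_of_natDegree_X_mul_sub_le_zero h42 h21).symm

-- The images on the chart around `v₁∧v₂` are the reversed polynomials (up to the sign of
-- `x₃ = −z₂/t₂` and the `z₂`-correction of `x₄`, `x₅`).
theorem extendsGlobally_param (c : Fin 13 → ℂ) : ExtendsGlobally (Param c) := by
  refine ⟨![(C (c 2) + C (c 1) * X + C (c 0) * X ^ 2, C (c 4) + C (c 3) * X),
    (C (c 6) + C (c 5) * X, C (c 7)),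
    (-(C (c 9) + C (c 8) * X), -C (c 10)),
    (C (c 11), C (-(c 8))),
    (C (c 12), C (-(c 8)))], fun t ht => ?_⟩
  refine ⟨⟨?_, ?_⟩, ⟨?_, ?_⟩, ⟨?_, ?_⟩, ⟨?_, ?_⟩, ⟨?_, ?_⟩⟩ <;>
    simp only [Param, Matrix.cons_val, Matrix.cons_val_zero, Matrix.cons_val_one, eval_add,
      eval_neg, eval_mul, eval_pow, eval_C, eval_X, map_neg] <;>
    field_simp <;> ring

theorem extendsGlobally_iff_mem_range_param (ψ : HomData) :
    ExtendsGlobally ψ ↔ ψ ∈ Set.range Param := by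
  refine ⟨fun h => ⟨paramCoeffs ψ, h.degreeBounds.param_paramCoeffs⟩, ?_⟩
  rintro ⟨c, rfl⟩
  exact extendsGlobally_param c

theorem sigma_double_line_homs :
    Function.Injective Param ∧
    ∀ ψ : HomData, (ExtendsGlobally ψ ↔ ψ ∈ Set.range Param) :=
  ⟨param_injective, extendsGlobally_iff_mem_range_param⟩

end Stmt14
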